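/- arXiv:2604.12029 — 2 statements merged into one kernel-verified Lean document; each statement's English description precedes it below -/
import Mathlib

section
/- Let k ≥ 1, t ≥ 1, and n ≥ 2. Then γ_{[k]R}(C_{6t} □ P_n) ≤ t(⌈4n/3⌉(k+1) + (k+1)) if n ≡ 0 (mod 3); γ_{[k]R}(C_{6t} □ P_n) ≤ t·⌈4n/3⌉(k+1) if n ≡ 1 (mod 3); and γ_{[k]R}(C_{6t} □ P_n) ≤ t(⌈4n/3⌉(k+1) + k) if n ≡ 2 (mod 3). -/
open Finset
open scoped Classical

/-- The cylindrical grid `C_m □ P_n`: the Cartesian (box) product of the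
cycle on `m` vertices with the path on `n` vertices. -/
def cylGrid (m n : ℕ) : SimpleGraph (Fin m × Fin n) :=
  (SimpleGraph.cycleGraph m).boxProd (SimpleGraph.pathGraph n)

/-- `f : V → ℕ` is a `[k]`-Roman dominating function on `G`:
values lie in `{0,…,k+1}`, and every vertex `v` with `f v < k` satisfies
`f(N[v]) ≥ k + |AN(v)|`, where `AN(v)` is the set of neighbors of `v`
with positive label. -/
def IsKRomanDF {V : Type*} [Fintype V] (G : SimpleGraph V) (k : ℕ) (f : V → ℕ) : Prop :=
  (∀ v, f v ≤ k + 1) ∧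
  (∀ v, f v < k →
    k + (Finset.univ.filter fun u => G.Adj v u ∧ 0 < f u).card ≤
      f v + ∑ u ∈ Finset.univ.filter (fun u => G.Adj v u), f u)

/-- The `[k]`-Roman domination number: the minimum total weight of a
`[k]`-Roman dominating function. -/
noncomputable def gammaKR {V : Type*} [Fintype V] (G : SimpleGraph V) (k : ℕ) : ℕ :=
  sInf { w : ℕ | ∃ f : V → ℕ, IsKRomanDF G k f ∧ w = ∑ v, f v }

/-- The packing number: the maximum cardinality of a set of vertices whose
closed neighborhoods are pairwise disjoint. -/
noncomputable def packingNumber {V : Type*} [Fintype V] (G : SimpleGraph V) : ℕ :=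
  sSup { w : ℕ | ∃ D : Set V,
    (D.Pairwise fun u v =>
      Disjoint (insert u (G.neighborSet u)) (insert v (G.neighborSet v))) ∧
    w = D.ncard }

/-!
Cut `C_{6t} □ P_n` into cells `(i, j)`, `i` around the cycle and `j` along the path, and give each
cell the phase `i + 3j (mod 6)`. Label a cell `k + 1` (heavy) when its phase is `2` or `4` and
`3 ∣ j`, or its phase is `3` and `3 ∤ j`. Every other cell then has a heavy neighbour, except in
the last column, which is patched by one more heavy cell per six rows when `n ≡ 0 (mod 3)` and by a
cell labelled `k` when `n ≡ 2 (mod 3)`. A labelling by `0, k, k + 1` in which every `0` sees a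
`k + 1` is `[k]`-Roman dominating: the `k + 1` pays for `k`, every other active neighbour for
itself. Column `j` holds two heavy cells per six rows when `3 ∣ j` and one otherwise, which makes
`n + ⌈n/3⌉ = ⌈4n/3⌉` per six rows.
-/

theorem gammaKR_le_sum {V : Type*} [Fintype V] {G : SimpleGraph V} {k : ℕ} {f : V → ℕ}
    (hf : IsKRomanDF G k f) : gammaKR G k ≤ ∑ v, f v :=
  Nat.sInf_le ⟨f, hf, rfl⟩

theorem isKRomanDF_of_forall_exists_adj {V : Type*} [Fintype V] {G : SimpleGraph V} {k : ℕ}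
    {f : V → ℕ} (hle : ∀ v, f v ≤ k + 1)
    (hdom : ∀ v, f v < k → f v = 0 ∧ ∃ u, G.Adj v u ∧ f u = k + 1) :
    IsKRomanDF G k f := by
  refine ⟨hle, fun v hv => ?_⟩
  obtain ⟨hv0, u, hvu, hu⟩ := hdom v hv
  set A := univ.filter fun u => G.Adj v u ∧ 0 < f u
  have huA : u ∈ A := by simp [A, hvu, hu]
  have hsum : ∑ x ∈ univ.filter (G.Adj v), f x = ∑ x ∈ A, f x := by
    rw [← sum_filter_ne_zero, filter_filter]
    simp only [A, Nat.pos_iff_ne_zero]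
  have hsplit : ∑ x ∈ A, f x = #A + ∑ x ∈ A, (f x - 1) := by
    rw [card_eq_sum_ones, ← sum_add_distrib]
    exact sum_congr rfl fun x hx => by simp only [A, mem_filter] at hx; omega
  calc k + #A = #A + (f u - 1) := by omega
    _ ≤ #A + ∑ x ∈ A, (f x - 1) := by
      gcongr; exact single_le_sum (f := fun x => f x - 1) (fun _ _ => Nat.zero_le _) huA
    _ = f v + ∑ u ∈ univ.filter (G.Adj v), f u := by rw [hv0, hsum, hsplit, zero_add]

theorem ZMod.sum_range_natCast {M : Type*} [AddCommMonoid M] (c : ℕ) [NeZero c]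
    (h : ZMod c → M) : ∑ x ∈ range c, h x = ∑ p : ZMod c, h p := by
  obtain ⟨c, rfl⟩ := Nat.exists_eq_succ_of_ne_zero (NeZero.ne c)
  rw [← Fin.sum_univ_eq_sum_range (fun x => h x)]
  exact Fintype.sum_congr _ _ fun i => congrArg h (Fin.cast_val_eq_self i)

theorem ZMod.sum_fin_mul_natCast {M : Type*} [AddCommMonoid M] (c t : ℕ) [NeZero c]
    (h : ZMod c → M) : ∑ i : Fin (c * t), h (i : ℕ) = t • ∑ p : ZMod c, h p := by
  rw [Fin.sum_univ_eq_sum_range (fun x => h x)]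
  induction t with
  | zero => simp
  | succ t ih => simp [Nat.mul_succ, sum_range_add, ih, succ_nsmul, ZMod.sum_range_natCast]

theorem ZMod.natCast_mod_of_dvd {m c : ℕ} (h : c ∣ m) (x : ℕ) : ((x % m : ℕ) : ZMod c) = x :=
  (ZMod.natCast_eq_natCast_iff' _ _ _).2 (Nat.mod_mod_of_dvd x h)

theorem Fin.natCast_val_add_one_of_dvd {m c : ℕ} [NeZero m] (h : c ∣ m) (i : Fin m) :
    (((i + 1 : Fin m) : ℕ) : ZMod c) = (i : ℕ) + 1 := by
  rw [Fin.val_add, ZMod.natCast_mod_of_dvd h, Nat.cast_add, Fin.val_one',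
    ZMod.natCast_mod_of_dvd h, Nat.cast_one]

theorem Fin.natCast_val_sub_one_of_dvd {m c : ℕ} [NeZero m] (h : c ∣ m) (i : Fin m) :
    (((i - 1 : Fin m) : ℕ) : ZMod c) = (i : ℕ) - 1 := by
  rw [eq_sub_iff_add_eq, ← Fin.natCast_val_add_one_of_dvd h, sub_add_cancel]

theorem sum_range_ite_mod_three (n : ℕ) :
    ∑ j ∈ range n, (if j % 3 = 0 then 2 else 1) = n + (n + 2) / 3 := by
  induction n with
  | zero => rfl
  | succ n ih => rw [sum_range_succ, ih]; split_ifs <;> omega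

theorem sum_fin_succ_decide_last {M : Type*} [AddCommMonoid M] (n : ℕ) (g : ℕ → Bool → M) :
    ∑ j : Fin (n + 1), g j (j.val + 1 = n + 1) = ∑ j ∈ range n, g j false + g n true := by
  rw [Fin.sum_univ_castSucc, ← Fin.sum_univ_eq_sum_range (fun j => g j false)]
  simp [Nat.ne_of_lt]

theorem cylGrid_adj_add_one {m n : ℕ} [NeZero m] (hm : 2 ≤ m) (i : Fin m) (j : Fin n) :
    (cylGrid m n).Adj (i, j) (i + 1, j) := by
  rw [cylGrid, SimpleGraph.boxProd_adj_left, SimpleGraph.cycleGraph_adj', add_sub_cancel_left,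
    Fin.val_one', Nat.mod_eq_of_lt hm]
  exact Or.inr rfl

theorem cylGrid_adj_sub_one {m n : ℕ} [NeZero m] (hm : 2 ≤ m) (i : Fin m) (j : Fin n) :
    (cylGrid m n).Adj (i, j) (i - 1, j) := by
  simpa using (cylGrid_adj_add_one hm (i - 1) j).symm

theorem cylGrid_adj_right {m n : ℕ} {i : Fin m} {j j' : Fin n} :
    (cylGrid m n).Adj (i, j) (i, j') ↔ j.val + 1 = j'.val ∨ j'.val + 1 = j.val := by
  rw [cylGrid, SimpleGraph.boxProd_adj_right, SimpleGraph.pathGraph_adj]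

namespace CylPattern

/-- For the cell `(i, j)`: `p = i + 3j`, `r = j mod 3`, and `last` says whether `j` is the last
column. -/
def isHeavy (p : ZMod 6) (r : ZMod 3) (last : Bool) : Bool :=
  (r = 0 && (p = 2 || p = 4)) || (r ≠ 0 && p = 3) || (last && r = 2 && p = 0)

def isLight (p : ZMod 6) (r : ZMod 3) (last : Bool) : Bool :=
  last && r = 1 && p = 0

/-- The four disjuncts are the neighbours `(i + 1, j)`, `(i - 1, j)`, `(i, j + 1)` and `(i, j - 1)`;
`first` says `j = 0` and `next` whether `j + 1` is the last column. -/
theorem exists_isHeavy_adj :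
    ∀ (p : ZMod 6) (r : ZMod 3) (first last next : Bool), (first → r = 0 ∧ last = false) →
      isHeavy p r last = false → isLight p r last = false →
      isHeavy (p + 1) r last ∨ isHeavy (p - 1) r last ∨
        (last = false ∧ isHeavy (p + 3) (r + 1) next) ∨
        (first = false ∧ isHeavy (p - 3) (r - 1) false) := by
  decide

theorem card_isHeavy (r : ZMod 3) (last : Bool) :
    #{p | isHeavy p r last} = (if r.val = 0 then 2 else 1) + if last ∧ r.val = 2 then 1 else 0 := by
  revert r last; decide

theorem card_isLight (r : ZMod 3) (last : Bool) :
    #{p | isLight p r last} = if last ∧ r.val = 1 then 1 else 0 := by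
  revert r last; decide

theorem sum_card_isHeavy {n : ℕ} (hn : n ≠ 0) :
    ∑ j : Fin n, #{p | isHeavy p (j : ℕ) (j.val + 1 = n)} =
      n + (n + 2) / 3 + if n % 3 = 0 then 1 else 0 := by
  obtain ⟨n, rfl⟩ := Nat.exists_eq_succ_of_ne_zero hn
  rw [sum_fin_succ_decide_last n fun j b => #{p | isHeavy p (j : ZMod 3) b}]
  simp only [card_isHeavy, ZMod.val_natCast, Bool.false_eq_true, false_and, if_false, add_zero,
    sum_range_ite_mod_three, true_and]
  split_ifs <;> omega

theorem sum_card_isLight {n : ℕ} (hn : n ≠ 0) :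
    ∑ j : Fin n, #{p | isLight p (j : ℕ) (j.val + 1 = n)} = if n % 3 = 2 then 1 else 0 := by
  obtain ⟨n, rfl⟩ := Nat.exists_eq_succ_of_ne_zero hn
  rw [sum_fin_succ_decide_last n fun j b => #{p | isLight p (j : ZMod 3) b}]
  simp only [card_isLight, ZMod.val_natCast, Bool.false_eq_true, false_and, if_false,
    sum_const_zero, zero_add, true_and]
  split_ifs <;> omega

def cellLabel (k : ℕ) (p : ZMod 6) (r : ZMod 3) (last : Bool) : ℕ :=
  if isHeavy p r last then k + 1 else if isLight p r last then k else 0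

theorem sum_cellLabel (k : ℕ) (r : ZMod 3) (last : Bool) :
    ∑ p, cellLabel k p r last =
      (k + 1) * #{p | isHeavy p r last} + k * #{p | isLight p r last} := by
  have hdisj : ∀ p, isHeavy p r last → isLight p r last = false := by revert r last; decide
  simp only [cellLabel, card_filter, mul_sum, ← sum_add_distrib]
  refine sum_congr rfl fun p _ => ?_
  by_cases hh : isHeavy p r last <;> simp [hh, hdisj]

theorem isHeavy_eq_false_and_isLight_eq_false_of_cellLabel_lt {k : ℕ} {p : ZMod 6}
    {r : ZMod 3} {last : Bool} (h : cellLabel k p r last < k) :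
    isHeavy p r last = false ∧ isLight p r last = false := by
  unfold cellLabel at h
  split_ifs at h with hH hL
  all_goals first | omega | simp_all

def phase {m n : ℕ} (v : Fin m × Fin n) : ZMod 6 := (v.1 : ℕ) + 3 * (v.2 : ℕ)

def label (k n : ℕ) {m : ℕ} (v : Fin m × Fin n) : ℕ :=
  cellLabel k (phase v) (v.2 : ℕ) (v.2.val + 1 = n)

theorem label_eq_of_isHeavy {k n m : ℕ} {v : Fin m × Fin n}
    (h : isHeavy (phase v) (v.2 : ℕ) (v.2.val + 1 = n)) : label k n v = k + 1 :=
  if_pos h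

theorem isKRomanDF_label {k m n : ℕ} (hm : 6 ∣ m) (hn : 2 ≤ n) :
    IsKRomanDF (cylGrid m n) k (label k n) := by
  refine isKRomanDF_of_forall_exists_adj (fun v => ?_) fun ⟨i, j⟩ hv => ?_
  · unfold label cellLabel; split_ifs <;> omega
  have hm2 : 2 ≤ m := by have := i.pos; omega
  have : NeZero m := ⟨by omega⟩
  obtain ⟨hheavy, hlight⟩ := isHeavy_eq_false_and_isLight_eq_false_of_cellLabel_lt hv
  refine ⟨by simp [label, cellLabel, hheavy, hlight], ?_⟩
  have hstart : j.val = 0 → ((j : ℕ) : ZMod 3) = 0 ∧ decide (j.val + 1 = n) = false := by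
    intro h0; simp [h0]; omega
  rcases exists_isHeavy_adj _ _ (j.val = 0) _ (j.val + 2 = n) (by simpa using hstart)
    hheavy hlight with h | h | ⟨hlast, h⟩ | ⟨hfirst, h⟩
  · refine ⟨(i + 1, j), cylGrid_adj_add_one hm2 i j, label_eq_of_isHeavy ?_⟩
    convert h using 2
    simp only [phase, Fin.natCast_val_add_one_of_dvd hm]; ring
  · refine ⟨(i - 1, j), cylGrid_adj_sub_one hm2 i j, label_eq_of_isHeavy ?_⟩
    convert h using 2
    simp only [phase, Fin.natCast_val_sub_one_of_dvd hm]; ring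
  · have hj : j.val + 1 < n := by simp at hlast; omega
    refine ⟨(i, ⟨j.val + 1, hj⟩), cylGrid_adj_right.2 (Or.inl rfl), label_eq_of_isHeavy ?_⟩
    convert h using 2
    · simp only [phase]; push_cast; ring
    · push_cast; rfl
  · have hj : 0 < j.val := by simp at hfirst; omega
    refine ⟨(i, ⟨j.val - 1, by omega⟩), cylGrid_adj_right.2 (Or.inr (by simp; omega)),
      label_eq_of_isHeavy ?_⟩
    convert h using 2
    · simp only [phase, Nat.cast_pred hj]; ring
    · simp [Nat.cast_pred hj]
    · simp; omega

theorem sum_label (k t : ℕ) {n : ℕ} (hn : n ≠ 0) :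
    ∑ v : Fin (6 * t) × Fin n, label k n v =
      t * ((k + 1) * (n + (n + 2) / 3 + if n % 3 = 0 then 1 else 0) +
        k * if n % 3 = 2 then 1 else 0) := by
  have hcolumn (j : Fin n) : ∑ i : Fin (6 * t), label k n (i, j) =
      t * ∑ p, cellLabel k p (j : ℕ) (j.val + 1 = n) := by
    let column (p : ZMod 6) := cellLabel k p (j : ℕ) (j.val + 1 = n)
    calc ∑ i : Fin (6 * t), label k n (i, j)
        = t • ∑ p, column (Equiv.addRight (3 * ((j : ℕ) : ZMod 6)) p) :=
          ZMod.sum_fin_mul_natCast 6 t fun p => column (p + 3 * ((j : ℕ) : ZMod 6))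
      _ = t * ∑ p, column p := by rw [Equiv.sum_comp, smul_eq_mul]
  simp only [Fintype.sum_prod_type_right, hcolumn, ← mul_sum, sum_cellLabel, sum_add_distrib,
    sum_card_isHeavy hn, sum_card_isLight hn]

end CylPattern

theorem gammaKR_cylGrid_six_mul_le (k t : ℕ) {n : ℕ} (hn : 2 ≤ n) :
    gammaKR (cylGrid (6 * t) n) k ≤
      t * ((k + 1) * (n + (n + 2) / 3 + if n % 3 = 0 then 1 else 0) +
        k * if n % 3 = 2 then 1 else 0) :=
  (gammaKR_le_sum (CylPattern.isKRomanDF_label (dvd_mul_right 6 t) hn)).trans_eq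
    (CylPattern.sum_label k t (by omega))

theorem ceil_four_mul_div_three (n : ℕ) : ⌈(4 * (n : ℚ)) / 3⌉ = ((n + (n + 2) / 3 : ℕ) : ℤ) := by
  have h : (4 * (n : ℚ)) / 3 = ((4 * n : ℕ) : ℚ) / ((3 : ℕ) : ℚ) := by push_cast; rfl
  rw [h, Rat.ceil_natCast_div_natCast]
  omega

theorem gammaKR_C6t_general (k t n : ℕ) (hn : 2 ≤ n) :
    (n % 3 = 0 →
      (gammaKR (cylGrid (6 * t) n) k : ℤ) ≤
        (t : ℤ) * (⌈(4 * (n : ℚ)) / 3⌉ * ((k : ℤ) + 1) + ((k : ℤ) + 1))) ∧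
    (n % 3 = 1 →
      (gammaKR (cylGrid (6 * t) n) k : ℤ) ≤
        (t : ℤ) * ⌈(4 * (n : ℚ)) / 3⌉ * ((k : ℤ) + 1)) ∧
    (n % 3 = 2 →
      (gammaKR (cylGrid (6 * t) n) k : ℤ) ≤
        (t : ℤ) * (⌈(4 * (n : ℚ)) / 3⌉ * ((k : ℤ) + 1) + (k : ℤ))) := by
  have hbound := gammaKR_cylGrid_six_mul_le k t hn
  rw [ceil_four_mul_div_three]
  refine ⟨fun h => ?_, fun h => ?_, fun h => ?_⟩ <;>
    simp [h] at hbound <;> push_cast at hbound ⊢ <;> linarith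

theorem gammaKR_C6t (k t n : ℕ) (hk : 1 ≤ k) (ht : 1 ≤ t) (hn : 2 ≤ n) :
    (n % 3 = 0 →
      (gammaKR (cylGrid (6 * t) n) k : ℤ) ≤
        (t : ℤ) * (⌈(4 * (n : ℚ)) / 3⌉ * ((k : ℤ) + 1) + ((k : ℤ) + 1))) ∧
    (n % 3 = 1 →
      (gammaKR (cylGrid (6 * t) n) k : ℤ) ≤
        (t : ℤ) * ⌈(4 * (n : ℚ)) / 3⌉ * ((k : ℤ) + 1)) ∧
    (n % 3 = 2 →
      (gammaKR (cylGrid (6 * t) n) k : ℤ) ≤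
        (t : ℤ) * (⌈(4 * (n : ℚ)) / 3⌉ * ((k : ℤ) + 1) + (k : ℤ))) :=
  gammaKR_C6t_general k t n hn
end

section
/- Let k ≥ 1, m ≥ 3, and n ≥ 4. Then γ_{[k]R}(C_m □ P_n) ≤ m(n−2)·⌈(k+4)/5⌉ + 2m·⌈(k+3−⌈(k+4)/5⌉)/3⌉. -/
open Finset
open scoped Classical

/-! ### Auxiliary material -/

/-- Column labelling: `b` on the two boundary columns, `a` on interior columns. -/
def gfun (n' a b : ℕ) (j : Fin (n' + 4)) : ℕ :=
  if j.val = 0 ∨ j.val = n' + 3 then b else a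

lemma gfun_b {n' a b : ℕ} {j : Fin (n' + 4)} (h : j.val = 0 ∨ j.val = n' + 3) :
    gfun n' a b j = b := if_pos h

lemma gfun_a {n' a b : ℕ} {j : Fin (n' + 4)} (h : ¬(j.val = 0 ∨ j.val = n' + 3)) :
    gfun n' a b j = a := if_neg h

lemma gfun_mem {n' a b : ℕ} (j : Fin (n' + 4)) :
    gfun n' a b j = a ∨ gfun n' a b j = b := by
  unfold gfun; split
  exacts [Or.inr rfl, Or.inl rfl]

lemma cycFilter (m' : ℕ) (i : Fin (m' + 3)) :
    (univ.filter fun x : Fin (m' + 3) => (SimpleGraph.cycleGraph (m' + 3)).Adj i x)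
      = {i - 1, i + 1} := by
  ext x
  simp only [mem_filter, mem_univ, true_and, mem_insert, mem_singleton,
    SimpleGraph.cycleGraph_adj]
  constructor
  · rintro (h | h)
    · left; rw [← h]; abel
    · right; rw [← h]; abel
  · rintro (rfl | rfl)
    · left; abel
    · right; abel

lemma cycNe (m' : ℕ) (i : Fin (m' + 3)) : i - 1 ≠ i + 1 := by
  intro h
  have h2 : (1 : Fin (m' + 3)) + 1 = 0 := by
    have := congrArg (fun x => x - i + 1) h
    simpa [sub_sub_cancel, add_sub_cancel] using this.symm
  have h3 : ((1 : Fin (m' + 3)) + 1).val = (0 : Fin (m' + 3)).val := congrArg Fin.val h2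
  rw [Fin.add_def] at h3
  simp [Fin.val_one, Nat.mod_eq_of_lt] at h3

lemma pathFilter0 (n' : ℕ) (j : Fin (n' + 4)) (h0 : j.val = 0) :
    (univ.filter fun y : Fin (n' + 4) => (SimpleGraph.pathGraph (n' + 4)).Adj j y)
      = {(⟨1, by omega⟩ : Fin (n' + 4))} := by
  ext y
  simp only [mem_filter, mem_univ, true_and, mem_singleton, SimpleGraph.pathGraph_adj,
    Fin.ext_iff]
  omega

lemma pathFilterTop (n' : ℕ) (j : Fin (n' + 4)) (h0 : j.val = n' + 3) :
    (univ.filter fun y : Fin (n' + 4) => (SimpleGraph.pathGraph (n' + 4)).Adj j y)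
      = {(⟨n' + 2, by omega⟩ : Fin (n' + 4))} := by
  ext y
  simp only [mem_filter, mem_univ, true_and, mem_singleton, SimpleGraph.pathGraph_adj,
    Fin.ext_iff]
  omega

lemma pathFilterMid (n' : ℕ) (j : Fin (n' + 4)) (h0 : 1 ≤ j.val) (h1 : j.val ≤ n' + 2) :
    (univ.filter fun y : Fin (n' + 4) => (SimpleGraph.pathGraph (n' + 4)).Adj j y)
      = {(⟨j.val - 1, by omega⟩ : Fin (n' + 4)), ⟨j.val + 1, by omega⟩} := by
  ext y
  simp only [mem_filter, mem_univ, true_and, mem_insert, mem_singleton,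
    SimpleGraph.pathGraph_adj, Fin.ext_iff]
  omega

lemma isKR_aux (k m' n' a b : ℕ) (hk : 1 ≤ k)
    (ha1 : k + 4 ≤ 5 * a) (hb1 : k + 3 ≤ 3 * b + a)
    (hak : a ≤ k + 1) (hbk : b ≤ k + 1) (hpa : 1 ≤ a) (hpb : 1 ≤ b) :
    IsKRomanDF (cylGrid (m' + 3) (n' + 4)) k (fun p => gfun n' a b p.2) := by
  constructor
  · intro v
    show gfun n' a b v.2 ≤ k + 1
    rcases gfun_mem (a := a) (b := b) v.2 with h | h <;> omega
  · rintro ⟨i, j⟩ -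
    have hgpos : ∀ p : Fin (m' + 3) × Fin (n' + 4), 0 < gfun n' a b p.2 := by
      intro p
      rcases gfun_mem (a := a) (b := b) p.2 with h | h <;> omega
    have hAN : (univ.filter fun u : Fin (m' + 3) × Fin (n' + 4) =>
          (cylGrid (m' + 3) (n' + 4)).Adj (i, j) u ∧ 0 < gfun n' a b u.2)
        = univ.filter fun u => (cylGrid (m' + 3) (n' + 4)).Adj (i, j) u := by
      apply filter_congr
      intro u _
      simp [hgpos u]
    simp only []
    rw [hAN]
    have hsplit : (univ.filter fun u : Fin (m' + 3) × Fin (n' + 4) =>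
          (cylGrid (m' + 3) (n' + 4)).Adj (i, j) u)
        = ((univ.filter fun x : Fin (m' + 3) => (SimpleGraph.cycleGraph (m' + 3)).Adj i x)
              ×ˢ {j})
          ∪ ({i} ×ˢ (univ.filter fun y : Fin (n' + 4) =>
              (SimpleGraph.pathGraph (n' + 4)).Adj j y)) := by
      ext ⟨x, y⟩
      simp only [mem_filter, mem_univ, true_and, mem_union, mem_product, mem_singleton,
        cylGrid, SimpleGraph.boxProd_adj]
      constructor
      · rintro (⟨h1, rfl⟩ | ⟨h1, rfl⟩)
        · exact Or.inl ⟨h1, rfl⟩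
        · exact Or.inr ⟨rfl, h1⟩
      · rintro (⟨h1, rfl⟩ | ⟨rfl, h1⟩)
        · exact Or.inl ⟨h1, rfl⟩
        · exact Or.inr ⟨h1, rfl⟩
    have hdisj : Disjoint
        ((univ.filter fun x : Fin (m' + 3) => (SimpleGraph.cycleGraph (m' + 3)).Adj i x)
          ×ˢ {j})
        ({i} ×ˢ (univ.filter fun y : Fin (n' + 4) =>
          (SimpleGraph.pathGraph (n' + 4)).Adj j y)) := by
      rw [Finset.disjoint_left]
      rintro ⟨x, y⟩ hx hy
      simp only [mem_product, mem_filter, mem_univ, true_and, mem_singleton] at hx hy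
      exact hx.1.ne hy.1.symm
    rw [hsplit, Finset.card_union_of_disjoint hdisj, Finset.sum_union hdisj,
      cycFilter m' i]
    have hne : i - 1 ≠ i + 1 := cycNe m' i
    rw [Finset.card_product, Finset.card_singleton,
      Finset.card_insert_of_notMem (by simpa using hne), Finset.card_singleton,
      Finset.card_product, Finset.card_singleton]
    simp only [Finset.sum_product, Finset.sum_singleton]
    rw [Finset.sum_const,
      Finset.card_insert_of_notMem (by simpa using hne), Finset.card_singleton,
      smul_eq_mul]
    -- goal: k + ((1+1)*1 + 1 * cardNp) ≤ gfun j + ((1+1) * gfun j + ∑ y in Np, gfun y)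
    by_cases h0 : j.val = 0
    · rw [pathFilter0 n' j h0, Finset.card_singleton, Finset.sum_singleton,
        gfun_b (Or.inl h0), gfun_a (j := (⟨1, by omega⟩ : Fin (n' + 4))) (by simp)]
      omega
    · by_cases htop : j.val = n' + 3
      · rw [pathFilterTop n' j htop, Finset.card_singleton, Finset.sum_singleton,
          gfun_b (Or.inr htop), gfun_a (j := (⟨n' + 2, by omega⟩ : Fin (n' + 4))) (by simp)]
        omega
      · have hj1 : 1 ≤ j.val := by omega
        have hj2 : j.val ≤ n' + 2 := by omega
        have hmemne : (⟨j.val - 1, by omega⟩ : Fin (n' + 4)) ≠ ⟨j.val + 1, by omega⟩ := by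
          simp only [ne_eq, Fin.mk.injEq]
          omega
        rw [pathFilterMid n' j hj1 hj2,
          Finset.card_insert_of_notMem (by simpa using hmemne), Finset.card_singleton,
          Finset.sum_insert (by simpa using hmemne), Finset.sum_singleton,
          gfun_a (j := j) (by omega)]
        rcases gfun_mem (n' := n') (a := a) (b := b) ⟨j.val - 1, by omega⟩ with h1 | h1 <;>
          rcases gfun_mem (n' := n') (a := a) (b := b) ⟨j.val + 1, by omega⟩ with h2 | h2 <;>
          rw [h1, h2] <;> omega

lemma weight_aux (m' n' a b : ℕ) :
    ∑ v : Fin (m' + 3) × Fin (n' + 4), gfun n' a b v.2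
      = (m' + 3) * (2 * b + (n' + 2) * a) := by
  rw [Fintype.sum_prod_type]
  dsimp only
  rw [Finset.sum_const, Finset.card_univ, Fintype.card_fin, smul_eq_mul]
  congr 1
  unfold gfun
  rw [Finset.sum_ite, Finset.sum_const, Finset.sum_const, smul_eq_mul, smul_eq_mul]
  have hP : (univ.filter fun j : Fin (n' + 4) => j.val = 0 ∨ j.val = n' + 3)
      = {(⟨0, by omega⟩ : Fin (n' + 4)), ⟨n' + 3, by omega⟩} := by
    ext j
    simp only [mem_filter, mem_univ, true_and, mem_insert, mem_singleton, Fin.ext_iff]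
  have hcP : (univ.filter fun j : Fin (n' + 4) => j.val = 0 ∨ j.val = n' + 3).card = 2 := by
    rw [hP, Finset.card_insert_of_notMem (by simp [Fin.ext_iff]), Finset.card_singleton]
  have hctot := Finset.card_filter_add_card_filter_not
    (s := (univ : Finset (Fin (n' + 4))))
    (p := fun j : Fin (n' + 4) => j.val = 0 ∨ j.val = n' + 3)
  rw [Finset.card_univ, Fintype.card_fin] at hctot
  rw [hcP]
  have : (univ.filter fun j : Fin (n' + 4) => ¬(j.val = 0 ∨ j.val = n' + 3)).card = n' + 2 := by
    omega
  rw [this]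

theorem gammaKR_uniform_general (k m n : ℕ) (hk : 1 ≤ k) (hm : 3 ≤ m) (hn : 4 ≤ n) :
    (gammaKR (cylGrid m n) k : ℤ) ≤
      (m : ℤ) * ((n : ℤ) - 2) * ⌈((k : ℚ) + 4) / 5⌉ +
        2 * (m : ℤ) * ⌈((k : ℚ) + 3 - ((⌈((k : ℚ) + 4) / 5⌉ : ℤ) : ℚ)) / 3⌉ := by
  obtain ⟨m', rfl⟩ : ∃ m', m = m' + 3 := ⟨m - 3, by omega⟩
  obtain ⟨n', rfl⟩ : ∃ n', n = n' + 4 := ⟨n - 4, by omega⟩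
  obtain ⟨a, ha1, ha2⟩ : ∃ a, k + 4 ≤ 5 * a ∧ 5 * a ≤ k + 8 := ⟨(k + 8) / 5, by omega⟩
  obtain ⟨b, hb1, hb2⟩ : ∃ b, k + 3 ≤ 3 * b + a ∧ 3 * b + a ≤ k + 5 :=
    ⟨(k + 5 - a) / 3, by omega⟩
  have hca : (⌈((k : ℚ) + 4) / 5⌉ : ℤ) = (a : ℤ) := by
    rw [Int.ceil_eq_iff]
    constructor
    · rw [lt_div_iff₀ (by norm_num : (0 : ℚ) < 5)]
      have h2 : (5 * a : ℚ) ≤ (k : ℚ) + 8 := by exact_mod_cast ha2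
      push_cast
      linarith
    · rw [div_le_iff₀ (by norm_num : (0 : ℚ) < 5)]
      have h2 : (k : ℚ) + 4 ≤ 5 * a := by exact_mod_cast ha1
      push_cast
      linarith
  have hcb : (⌈((k : ℚ) + 3 - ((a : ℤ) : ℚ)) / 3⌉ : ℤ) = (b : ℤ) := by
    rw [Int.ceil_eq_iff]
    have h1 : (k : ℚ) + 3 ≤ 3 * b + a := by exact_mod_cast hb1
    have h2 : (3 * b + a : ℚ) ≤ (k : ℚ) + 5 := by exact_mod_cast hb2
    constructor
    · rw [lt_div_iff₀ (by norm_num : (0 : ℚ) < 3)]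
      push_cast
      push_cast at h2
      linarith
    · rw [div_le_iff₀ (by norm_num : (0 : ℚ) < 3)]
      push_cast
      push_cast at h1
      linarith
  rw [hca, hcb]
  have key : gammaKR (cylGrid (m' + 3) (n' + 4)) k ≤ (m' + 3) * (2 * b + (n' + 2) * a) := by
    apply Nat.sInf_le
    exact ⟨fun p => gfun n' a b p.2,
      isKR_aux k m' n' a b hk (by omega) (by omega) (by omega) (by omega) (by omega) (by omega),
      (weight_aux m' n' a b).symm⟩
  calc (gammaKR (cylGrid (m' + 3) (n' + 4)) k : ℤ)
      ≤ (((m' + 3) * (2 * b + (n' + 2) * a) : ℕ) : ℤ) := by exact_mod_cast key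
    _ = _ := by push_cast; ring
end
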